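/- arXiv:2110.12643 — 5 statements merged into one kernel-verified Lean document; each statement's English description precedes it below -/
import Mathlib

section
/- Let M be an n×n integer matrix with det(M) = 1 and det(M^(3)) = 1, let α be a nonzero rational, and suppose the matrix N obtained from M by multiplying row i by α and column j by α^{-1} has all integer entries. Then det(N) = 1 and det(N^(3)) = 1. -/
/-! Rescaling row `i` by `α` and column `j` by `α⁻¹` multiplies the determinant by `α * α⁻¹ = 1`;
cubing the entries of the rescaled matrix gives the cube matrix rescaled by `α³` and `α⁻³`, whose
determinant is preserved for the same reason. -/

open Matrix

variable {n : Type*} [DecidableEq n]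

lemma ite_one_pow {M : Type*} [Monoid M] (i : n) (c : M) (m : ℕ) :
    (fun k => if k = i then c else 1) ^ m = fun k => if k = i then c ^ m else 1 := by
  ext k
  split_ifs <;> simp [*]

variable [Fintype n]

lemma map_pow_diagonal_mul_mul_diagonal {R : Type*} [CommSemiring R] (d e : n → R)
    (A : Matrix n n R) (m : ℕ) :
    (diagonal d * A * diagonal e).map (· ^ m) =
      diagonal (d ^ m) * A.map (· ^ m) * diagonal (e ^ m) := by
  ext a b
  simp only [map_apply, mul_diagonal, diagonal_mul, Pi.pow_apply, mul_pow]

lemma det_diagonal_ite_one {R : Type*} [CommRing R] (i : n) (c : R) :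
    (diagonal fun k => if k = i then c else 1).det = c := by
  simp [det_diagonal, Finset.prod_ite_eq']

lemma det_rescale_row_col {K : Type*} [Field K] (i j : n) {c : K} (hc : c ≠ 0)
    (A : Matrix n n K) :
    (diagonal (fun k => if k = i then c else 1) * A *
      diagonal (fun k => if k = j then c⁻¹ else 1)).det = A.det := by
  rw [det_mul, det_mul, det_diagonal_ite_one, det_diagonal_ite_one, mul_right_comm,
    mul_inv_cancel₀ hc, one_mul]

lemma Int.det_eq_of_cast_eq_rescale {K : Type*} [Field K] [CharZero K] {i j : n} {c : K}
    (hc : c ≠ 0) {M N : Matrix n n ℤ}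
    (h : N.map (Int.cast : ℤ → K) = diagonal (fun k => if k = i then c else 1) *
      M.map Int.cast * diagonal (fun k => if k = j then c⁻¹ else 1)) :
    N.det = M.det := by
  have := congrArg det h
  rw [det_rescale_row_col i j hc, ← Int.cast_det, ← Int.cast_det] at this
  exact_mod_cast this

theorem stmt_7 {n : ℕ} (M : Matrix (Fin n) (Fin n) ℤ)
    (h1 : M.det = 1) (h2 : (Matrix.of fun i j => (M i j) ^ 3).det = 1)
    (i j : Fin n) (α : ℚ) (hα : α ≠ 0)
    (N : Matrix (Fin n) (Fin n) ℤ)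
    (hN : (N.map (Int.cast : ℤ → ℚ)) =
      Matrix.diagonal (fun k => if k = i then α else 1) *
        (M.map (Int.cast : ℤ → ℚ)) *
        Matrix.diagonal (fun k => if k = j then α⁻¹ else 1)) :
    N.det = 1 ∧ (Matrix.of fun a b => (N a b) ^ 3).det = 1 := by
  refine ⟨h1 ▸ Int.det_eq_of_cast_eq_rescale hα hN, h2 ▸ ?_⟩
  have hcast : ∀ A : Matrix (Fin n) (Fin n) ℤ,
      (A.map (Int.cast : ℤ → ℚ)).map (· ^ 3) = (of fun a b => A a b ^ 3).map Int.cast := by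
    intro A; ext; simp
  have hcube := congrArg (·.map (· ^ 3)) hN
  simp only [map_pow_diagonal_mul_mul_diagonal, ite_one_pow, inv_pow, hcast] at hcube
  exact Int.det_eq_of_cast_eq_rescale (pow_ne_zero 3 hα) hcube
end

section
/- For every integer t, the matrix A(t) with rows ((16t+1)(2592t^2+288t+7), (18t+1)(24t+1)(144t+11), 2), ((12t+1)(5184t^2+540t+13), (72t+5)(1296t^2+153t+4), 3), (2, 3, 0) satisfies det(A(t)) = 1. -/
theorem stmt_8 (t : ℤ) :
    Matrix.det !![(16*t+1)*(2592*t^2+288*t+7), (18*t+1)*(24*t+1)*(144*t+11), 2;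
      (12*t+1)*(5184*t^2+540*t+13), (72*t+5)*(1296*t^2+153*t+4), 3;
      2, 3, 0] = 1 := by
  rw [Matrix.det_fin_three]
  simp only [Matrix.of_apply, Matrix.cons_val', Matrix.cons_val_zero, Matrix.cons_val_one,
    Matrix.cons_val, Matrix.cons_val_fin_one]
  ring
end

section
/- For every integer t, the matrix A(t) with rows ((16t+1)(2592t^2+288t+7), (18t+1)(24t+1)(144t+11), 2), ((12t+1)(5184t^2+540t+13), (72t+5)(1296t^2+153t+4), 3), (2, 3, 0) satisfies det(A(t)^(3)) = 1, where A(t)^(3) is the matrix obtained by cubing each entry of A(t). -/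
/-! Expanding along the border row and column `(2, 3, 0)`, the determinant of the entrywise cube
is `(6b)³ + (6c)³ - (9a)³ - (4d)³` in the remaining entries `a, b, c, d`, so the theorem is the
polynomial identity `(6b)³ + (6c)³ = (9a)³ + (4d)³ + 1` for the given parametrization. -/

theorem Matrix.det_cube_border_two_three {R : Type*} [CommRing R] (a b c d : R) :
    Matrix.det (Matrix.of fun i j => ((!![a, b, 2; c, d, 3; 2, 3, 0]) i j) ^ 3) =
      (6 * b) ^ 3 + (6 * c) ^ 3 - (9 * a) ^ 3 - (4 * d) ^ 3 := by
  rw [Matrix.det_fin_three]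
  simp only [Matrix.of_apply, Matrix.cons_val', Matrix.cons_val_zero, Matrix.cons_val_one,
    Matrix.cons_val_two, Matrix.empty_val', Matrix.cons_val_fin_one, Matrix.head_cons,
    Matrix.head_fin_const, Matrix.tail_cons]
  ring

theorem stmt_9 (t : ℤ) :
    Matrix.det (Matrix.of fun i j =>
      ((!![(16*t+1)*(2592*t^2+288*t+7), (18*t+1)*(24*t+1)*(144*t+11), 2;
        (12*t+1)*(5184*t^2+540*t+13), (72*t+5)*(1296*t^2+153*t+4), 3;
        2, 3, 0]) i j) ^ 3) = 1 := by
  rw [Matrix.det_cube_border_two_three]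
  ring
end

section
/- For every integer t, none of the entries of the matrix A(t) with rows ((16t+1)(2592t^2+288t+7), (18t+1)(24t+1)(144t+11), 2), ((12t+1)(5184t^2+540t+13), (72t+5)(1296t^2+153t+4), 3), (2, 3, 0) equals 1 or -1. -/
/-!
Each non-constant entry of `A(t)` avoids the residues `±1` modulo a suitable fixed modulus
(11, 15, 8 and 9 respectively), for every residue of `t`; hence it is never `±1`.
-/

theorem Int.ne_one_and_ne_neg_one_of_cast_zmod {n : ℕ} {a : ℤ}
    (h : (a : ZMod n) ≠ 1 ∧ (a : ZMod n) ≠ -1) : a ≠ 1 ∧ a ≠ -1 :=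
  ⟨fun ha => h.1 (by simp [ha]), fun ha => h.2 (by simp [ha])⟩

section Entries

variable (t : ℤ)

theorem entry₀₀_ne_one_and_ne_neg_one :
    (16*t+1)*(2592*t^2+288*t+7) ≠ 1 ∧ (16*t+1)*(2592*t^2+288*t+7) ≠ -1 := by
  apply Int.ne_one_and_ne_neg_one_of_cast_zmod (n := 11)
  push_cast
  generalize (t : ZMod 11) = x
  revert x
  decide

theorem entry₀₁_ne_one_and_ne_neg_one :
    (18*t+1)*(24*t+1)*(144*t+11) ≠ 1 ∧ (18*t+1)*(24*t+1)*(144*t+11) ≠ -1 := by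
  apply Int.ne_one_and_ne_neg_one_of_cast_zmod (n := 15)
  push_cast
  generalize (t : ZMod 15) = x
  revert x
  decide

theorem entry₁₀_ne_one_and_ne_neg_one :
    (12*t+1)*(5184*t^2+540*t+13) ≠ 1 ∧ (12*t+1)*(5184*t^2+540*t+13) ≠ -1 := by
  apply Int.ne_one_and_ne_neg_one_of_cast_zmod (n := 8)
  push_cast
  generalize (t : ZMod 8) = x
  revert x
  decide

theorem entry₁₁_ne_one_and_ne_neg_one :
    (72*t+5)*(1296*t^2+153*t+4) ≠ 1 ∧ (72*t+5)*(1296*t^2+153*t+4) ≠ -1 := by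
  apply Int.ne_one_and_ne_neg_one_of_cast_zmod (n := 9)
  push_cast
  generalize (t : ZMod 9) = x
  revert x
  decide

end Entries

theorem stmt_10 (t : ℤ) (i j : Fin 3) :
    (!![(16*t+1)*(2592*t^2+288*t+7), (18*t+1)*(24*t+1)*(144*t+11), 2;
      (12*t+1)*(5184*t^2+540*t+13), (72*t+5)*(1296*t^2+153*t+4), 3;
      2, 3, 0]) i j ≠ 1 ∧
    (!![(16*t+1)*(2592*t^2+288*t+7), (18*t+1)*(24*t+1)*(144*t+11), 2;
      (12*t+1)*(5184*t^2+540*t+13), (72*t+5)*(1296*t^2+153*t+4), 3;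
      2, 3, 0]) i j ≠ -1 := by
  fin_cases i <;> fin_cases j
  · exact entry₀₀_ne_one_and_ne_neg_one t
  · exact entry₀₁_ne_one_and_ne_neg_one t
  · norm_num
  · exact entry₁₀_ne_one_and_ne_neg_one t
  · exact entry₁₁_ne_one_and_ne_neg_one t
  all_goals norm_num
end

section
/- Let x1, ..., x5 be integers with x1+x2+x3+x4+x5 = 0 and x1^3+...+x5^3 = 0. Then the matrix B with rows (x2, −x3, 1), (−x4, x5, 1), (1, 1, 0) satisfies det(B) = x1 and det(B^(3)) = x1^3. -/
section BorderedMatrix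

variable {R : Type*} [CommRing R]

theorem det_border_ones (a b c d : R) :
    Matrix.det !![a, b, 1; c, d, 1; 1, 1, 0] = b + c - a - d := by
  rw [Matrix.det_fin_three]
  simp only [Matrix.of_apply, Matrix.cons_val', Matrix.cons_val_zero, Matrix.cons_val_one,
    Matrix.cons_val_two, Matrix.empty_val', Matrix.cons_val_fin_one, Matrix.head_cons,
    Matrix.tail_cons, Matrix.head_fin_const]
  ring

theorem of_pow_border_ones {n : ℕ} (hn : n ≠ 0) (a b c d : R) :
    Matrix.of (fun i j => (!![a, b, 1; c, d, 1; 1, 1, 0] i j) ^ n) =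
      !![a ^ n, b ^ n, 1; c ^ n, d ^ n, 1; 1, 1, 0] := by
  ext i j
  fin_cases i <;> fin_cases j <;> simp [hn]

end BorderedMatrix

theorem stmt_14 (x1 x2 x3 x4 x5 : ℤ)
    (h1 : x1 + x2 + x3 + x4 + x5 = 0)
    (h2 : x1^3 + x2^3 + x3^3 + x4^3 + x5^3 = 0) :
    Matrix.det !![x2, -x3, 1; -x4, x5, 1; 1, 1, 0] = x1 ∧
    Matrix.det (Matrix.of fun i j =>
      ((!![x2, -x3, 1; -x4, x5, 1; 1, 1, 0]) i j) ^ 3) = x1^3 := by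
  rw [of_pow_border_ones three_ne_zero, det_border_ones, det_border_ones]
  constructor
  · linear_combination -h1
  · linear_combination -h2
end
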